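/- arXiv:2012.10333 — 2 statements merged into one kernel-verified Lean document; each statement's English description precedes it below -/
import Mathlib

section
/- For a random vector X in R^d, a center v, and clipping radius τ > 0, the bias of clipping satisfies ‖E[clip_{v,τ}(X)] - E[X]‖ ≤ E[‖X - v‖²]/τ. -/
open MeasureTheory

/-- The bias of centered clipping: `‖E[clip_{v,τ}(X)] - E[X]‖ ≤ E‖X - v‖² / τ`. -/
theorem clipping_bias {Ω : Type*} [MeasurableSpace Ω] (μ : Measure Ω)
    [IsProbabilityMeasure μ] {d : ℕ}
    (X : Ω → EuclideanSpace ℝ (Fin d)) (v : EuclideanSpace ℝ (Fin d))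
    (τ : ℝ) (hτ : 0 < τ)
    (hX : Integrable X μ)
    (hX2 : Integrable (fun ω => ‖X ω - v‖ ^ 2) μ) :
    ‖(∫ ω, (v + (min 1 (τ / ‖X ω - v‖)) • (X ω - v)) ∂μ) - ∫ ω, X ω ∂μ‖
      ≤ (∫ ω, ‖X ω - v‖ ^ 2 ∂μ) / τ := by
  have hg : Measurable (fun x : EuclideanSpace ℝ (Fin d) =>
      v + (min 1 (τ / ‖x - v‖)) • (x - v)) := by
    apply measurable_const.add
    exact (measurable_const.min (measurable_const.div
      (measurable_id.sub measurable_const).norm)).smul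
      (measurable_id.sub measurable_const)
  have hmeas : AEStronglyMeasurable
      (fun ω => v + (min 1 (τ / ‖X ω - v‖)) • (X ω - v)) μ :=
    (hg.comp_aemeasurable hX.1.aemeasurable).aestronglyMeasurable
  have hclip : Integrable (fun ω => v + (min 1 (τ / ‖X ω - v‖)) • (X ω - v)) μ := by
    apply Integrable.mono' (integrable_const (‖v‖ + τ)) hmeas
    filter_upwards with ω
    have h1 : ‖min 1 (τ / ‖X ω - v‖) • (X ω - v)‖ ≤ τ := by
      rw [norm_smul, Real.norm_eq_abs]
      rcases eq_or_lt_of_le (norm_nonneg (X ω - v)) with h | h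
      · rw [← h]; simpa using hτ.le
      · have hmin : |min 1 (τ / ‖X ω - v‖)| = min 1 (τ / ‖X ω - v‖) := by
          rw [abs_of_nonneg]
          exact le_min zero_le_one (div_nonneg hτ.le (norm_nonneg _))
        rw [hmin]
        calc min 1 (τ / ‖X ω - v‖) * ‖X ω - v‖ ≤ (τ / ‖X ω - v‖) * ‖X ω - v‖ :=
              mul_le_mul_of_nonneg_right (min_le_right _ _) (norm_nonneg _)
          _ = τ := div_mul_cancel₀ τ (ne_of_gt h)
    calc ‖v + min 1 (τ / ‖X ω - v‖) • (X ω - v)‖ ≤ ‖v‖ + ‖min 1 (τ / ‖X ω - v‖) • (X ω - v)‖ :=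
          norm_add_le _ _
      _ ≤ ‖v‖ + τ := by linarith
  have hptwise : ∀ ω,
      ‖(v + (min 1 (τ / ‖X ω - v‖)) • (X ω - v)) - X ω‖ ≤ ‖X ω - v‖ ^ 2 / τ := by
    intro ω
    set r := ‖X ω - v‖ with hr
    have hr0 : 0 ≤ r := norm_nonneg _
    have key : (v + (min 1 (τ / r)) • (X ω - v)) - X ω = (min 1 (τ / r) - 1) • (X ω - v) := by
      rw [sub_smul, one_smul]
      abel
    rw [key, norm_smul, Real.norm_eq_abs, ← hr]
    rcases le_or_gt r τ with h | h
    · rcases eq_or_lt_of_le hr0 with h0 | h0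
      · rw [← h0]; simp
      · have : min 1 (τ / r) = 1 := min_eq_left (by
          rw [le_div_iff₀ h0]; linarith)
        rw [this]
        simp
        positivity
    · have : min 1 (τ / r) = τ / r := min_eq_right (by
        rw [div_le_one (lt_trans hτ h)]; linarith)
      rw [this]
      have hrpos : 0 < r := lt_trans hτ h
      have habs : |τ / r - 1| = 1 - τ / r := by
        rw [abs_sub_comm, abs_of_nonneg]
        rw [sub_nonneg, div_le_one hrpos]; linarith
      rw [habs, le_div_iff₀ hτ]
      have hc : τ / r * r = τ := div_mul_cancel₀ τ (ne_of_gt hrpos)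
      nlinarith [sq_nonneg (r - τ)]
  rw [← integral_sub hclip hX]
  calc ‖∫ ω, ((v + (min 1 (τ / ‖X ω - v‖)) • (X ω - v)) - X ω) ∂μ‖
      ≤ ∫ ω, ‖(v + (min 1 (τ / ‖X ω - v‖)) • (X ω - v)) - X ω‖ ∂μ :=
        norm_integral_le_integral_norm _
    _ ≤ ∫ ω, ‖X ω - v‖ ^ 2 / τ ∂μ :=
        integral_mono (hclip.sub hX).norm (hX2.div_const τ) hptwise
    _ = (∫ ω, ‖X ω - v‖ ^ 2 ∂μ) / τ := integral_div τ _
end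

section
/- Consider worker momentum m_{i,t} = α g_i(x_{t-1}) + (1-α)m_{i,t-1} with α ∈ (0,1], α_1 = 1, where for good workers i, j the stochastic gradients are independent and unbiased with variance at most σ². Then for all t ≥ 1, E‖m_{i,t} - m_{j,t}‖² ≤ 2σ²(α + (1-α)^{t-1}). -/
/-!
Write `D t = m_{i,t} - m_{j,t}` and `G t = g_i(t) - g_j(t)`, so that
`D (t+1) = α • G (t+1) + (1 - α) • D t`. Since `G (t+1)` is conditionally centred given `F t`
and `D t` is `F t`-measurable, the cross term vanishes in `L²`:
`E‖D (t+1)‖² = α² E‖G (t+1)‖² + (1-α)² E‖D t‖²`. The scalar recursion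
`e (t+1) ≤ (1-α)² e t + 2α²σ²` then unrolls to the bound, because `(1-α)² α + α² ≤ α`.
-/

open MeasureTheory
open scoped RealInnerProductSpace

section Orthogonality

variable {Ω E : Type*} {m mΩ : MeasurableSpace Ω} {μ : Measure Ω}
  [NormedAddCommGroup E] [InnerProductSpace ℝ E]

theorem MeasureTheory.MemLp.integrable_inner {f g : Ω → E} (hf : MemLp f 2 μ)
    (hg : MemLp g 2 μ) : Integrable (fun ω => ⟪f ω, g ω⟫) μ := by
  refine (L2.integrable_inner (𝕜 := ℝ) (hf.toLp f) (hg.toLp g)).congr ?_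
  filter_upwards [hf.coeFn_toLp, hg.coeFn_toLp] with ω hfω hgω
  rw [hfω, hgω]

theorem integral_inner_eq_zero_of_condExp_eq_zero [CompleteSpace E] (hm : m ≤ mΩ)
    [SigmaFinite (μ.trim hm)] {X Y : Ω → E} (hX : StronglyMeasurable[m] X)
    (hXY : Integrable (fun ω => ⟪X ω, Y ω⟫) μ) (hY : Integrable Y μ)
    (hY0 : μ[Y|m] =ᵐ[μ] 0) : ∫ ω, ⟪X ω, Y ω⟫ ∂μ = 0 :=
  calc ∫ ω, ⟪X ω, Y ω⟫ ∂μ = ∫ ω, (μ[fun ω => innerSL ℝ (X ω) (Y ω)|m]) ω ∂μ :=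
        (integral_condExp hm).symm
    _ = ∫ ω, innerSL ℝ (X ω) ((μ[Y|m]) ω) ∂μ :=
        integral_congr_ae (condExp_bilin_of_stronglyMeasurable_left _ hX hXY hY)
    _ = 0 := by
        rw [integral_congr_ae (hY0.mono fun ω hω => by rw [hω])]
        simp

theorem norm_smul_add_smul_sq (a b : ℝ) (x y : E) :
    ‖a • x + b • y‖ ^ 2 = a ^ 2 * ‖x‖ ^ 2 + b ^ 2 * ‖y‖ ^ 2 + 2 * (a * b) * ⟪x, y⟫ := by
  rw [norm_add_sq_real, norm_smul, norm_smul, real_inner_smul_left, real_inner_smul_right,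
    Real.norm_eq_abs, Real.norm_eq_abs, mul_pow, mul_pow, sq_abs, sq_abs]
  ring

theorem integral_norm_smul_add_smul_sq_of_condExp_eq_zero [CompleteSpace E] [IsFiniteMeasure μ]
    (hm : m ≤ mΩ) {G D : Ω → E} (hD : StronglyMeasurable[m] D) (hD2 : MemLp D 2 μ)
    (hG2 : MemLp G 2 μ) (hG0 : μ[G|m] =ᵐ[μ] 0) (a b : ℝ) :
    ∫ ω, ‖a • G ω + b • D ω‖ ^ 2 ∂μ
      = a ^ 2 * ∫ ω, ‖G ω‖ ^ 2 ∂μ + b ^ 2 * ∫ ω, ‖D ω‖ ^ 2 ∂μ := by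
  have hcross : ∫ ω, ⟪G ω, D ω⟫ ∂μ = 0 := by
    rw [integral_congr_ae (.of_forall fun ω => real_inner_comm (D ω) (G ω))]
    exact integral_inner_eq_zero_of_condExp_eq_zero hm hD (hD2.integrable_inner hG2)
      (hG2.integrable one_le_two) hG0
  have hGG := (hG2.integrable_norm_pow two_ne_zero).const_mul (a ^ 2)
  have hDD := (hD2.integrable_norm_pow two_ne_zero).const_mul (b ^ 2)
  have hGD := (hG2.integrable_inner hD2).const_mul (2 * (a * b))
  simp_rw [norm_smul_add_smul_sq]
  have hGGDD : Integrable (fun ω => a ^ 2 * ‖G ω‖ ^ 2 + b ^ 2 * ‖D ω‖ ^ 2) μ := hGG.add hDD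
  rw [integral_add hGGDD hGD, integral_add hGG hDD, integral_const_mul,
    integral_const_mul, integral_const_mul, hcross, mul_zero, add_zero]

end Orthogonality

theorem le_mul_add_one_sub_pow_of_le_one_sub_sq_mul_add {e : ℕ → ℝ} {c α : ℝ} (hc : 0 ≤ c)
    (hα0 : 0 ≤ α) (hα1 : α ≤ 1) (h1 : e 1 ≤ c)
    (hstep : ∀ t ≥ 1, e (t + 1) ≤ (1 - α) ^ 2 * e t + α ^ 2 * c) :
    ∀ t ≥ 1, e t ≤ c * (α + (1 - α) ^ (t - 1)) := by
  intro t ht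
  induction t, ht using Nat.le_induction with
  | base => simpa using h1.trans (le_mul_of_one_le_right hc (by linarith))
  | succ t ht ih =>
    obtain ⟨k, rfl⟩ : ∃ k, t = k + 1 := ⟨t - 1, by omega⟩
    rw [Nat.add_sub_cancel] at ih
    have hpow : (1 - α) ^ 2 * (1 - α) ^ k ≤ (1 - α) ^ (k + 1) := by
      rw [← pow_add]
      exact pow_le_pow_of_le_one (by linarith) (by linarith) (by omega)
    have hα : (1 - α) ^ 2 * α + α ^ 2 ≤ α := by nlinarith
    calc e (k + 1 + 1) ≤ (1 - α) ^ 2 * (c * (α + (1 - α) ^ k)) + α ^ 2 * c :=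
          (hstep _ ht).trans (by gcongr)
      _ = c * ((1 - α) ^ 2 * α + α ^ 2 + (1 - α) ^ 2 * (1 - α) ^ k) := by ring
      _ ≤ c * (α + (1 - α) ^ (k + 1)) := by gcongr

theorem worker_momentum_pairwise_distance_general {Ω : Type*} {mΩ : MeasurableSpace Ω}
    (μ : Measure Ω) [IsProbabilityMeasure μ] {d : ℕ}
    (σ α : ℝ) (hα0 : 0 < α) (hα1 : α ≤ 1)
    (F : ℕ → MeasurableSpace Ω) (hF : ∀ t, F t ≤ mΩ)
    (mi mj gi gj : ℕ → Ω → EuclideanSpace ℝ (Fin d))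
    -- momentum recursions, with `α₁ = 1`
    (hbasei : ∀ ω, mi 1 ω = gi 1 ω) (hbasej : ∀ ω, mj 1 ω = gj 1 ω)
    (hreci : ∀ t ≥ 2, ∀ ω, mi t ω = α • gi t ω + (1 - α) • mi (t - 1) ω)
    (hrecj : ∀ t ≥ 2, ∀ ω, mj t ω = α • gj t ω + (1 - α) • mj (t - 1) ω)
    -- momenta are adapted to the filtration
    (hadpi : ∀ t, StronglyMeasurable[F t] (mi t))
    (hadpj : ∀ t, StronglyMeasurable[F t] (mj t))
    -- the gradient difference of two good workers is conditionally zero mean …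
    (hunbiased : ∀ t ≥ 1, μ[fun ω => gi t ω - gj t ω|F (t - 1)] =ᵐ[μ] fun _ => 0)
    -- … with second moment at most `2σ²` (independence and variance ≤ σ² each)
    (hvar : ∀ t ≥ 1, (∫ ω, ‖gi t ω - gj t ω‖ ^ 2 ∂μ) ≤ 2 * σ ^ 2)
    -- integrability
    (hint : ∀ t, Integrable (fun ω => ‖mi t ω - mj t ω‖ ^ 2) μ)
    (hintg : ∀ t, Integrable (fun ω => ‖gi t ω - gj t ω‖ ^ 2) μ) :
    ∀ t ≥ 1, (∫ ω, ‖mi t ω - mj t ω‖ ^ 2 ∂μ)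
      ≤ 2 * σ ^ 2 * (α + (1 - α) ^ (t - 1)) := by
  set D : ℕ → Ω → EuclideanSpace ℝ (Fin d) := fun t ω => mi t ω - mj t ω
  set G : ℕ → Ω → EuclideanSpace ℝ (Fin d) := fun t ω => gi t ω - gj t ω
  have hD : ∀ t, StronglyMeasurable[F t] (D t) := fun t => (hadpi t).sub (hadpj t)
  have hD2 : ∀ t, MemLp (D t) 2 μ := fun t =>
    (memLp_two_iff_integrable_sq_norm ((hD t).mono (hF t)).aestronglyMeasurable).mpr (hint t)
  have hDrec : ∀ t ≥ 1, D (t + 1) = α • G (t + 1) + (1 - α) • D t := fun t ht => by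
    ext1 ω
    simp only [D, G, Pi.add_apply, Pi.smul_apply, hreci (t + 1) (by omega) ω,
      hrecj (t + 1) (by omega) ω, Nat.add_sub_cancel, smul_sub]
    abel
  -- measurability of the gradient difference is only known through the momenta
  have hG2 : ∀ t ≥ 1, MemLp (G (t + 1)) 2 μ := fun t ht => by
    have hG : G (t + 1) = α⁻¹ • (D (t + 1) - (1 - α) • D t) := by
      rw [hDrec t ht, add_sub_cancel_right, inv_smul_smul₀ hα0.ne']
    refine (memLp_two_iff_integrable_sq_norm ?_).mpr (hintg (t + 1))
    rw [hG]
    exact ((((hD _).mono (hF _)).sub (((hD t).mono (hF t)).const_smul _)).const_smul _)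
      |>.aestronglyMeasurable
  refine le_mul_add_one_sub_pow_of_le_one_sub_sq_mul_add (e := fun t => ∫ ω, ‖D t ω‖ ^ 2 ∂μ)
    (by positivity) hα0.le hα1 ?_ fun t ht => ?_
  · simpa only [D, hbasei, hbasej] using hvar 1 le_rfl
  · have horth := integral_norm_smul_add_smul_sq_of_condExp_eq_zero (hF t) (hD t) (hD2 t)
      (hG2 t ht) (hunbiased (t + 1) (by omega)) α (1 - α)
    simp only [hDrec t ht, Pi.add_apply, Pi.smul_apply, horth]
    linarith [mul_le_mul_of_nonneg_left (hvar (t + 1) (by omega)) (sq_nonneg α)]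

/-- Worker momentum contracts pairwise distance: if two good workers use
`m_{·,t} = α g_·(t) + (1-α) m_{·,t-1}` (with `α₁ = 1`, i.e. `m_{·,1} = g_·(1)`), where the
difference of their stochastic gradients is conditionally zero mean (independent unbiased
gradients at the common iterate) with `E‖g_i(t) - g_j(t)‖² ≤ 2σ²`, then for all `t ≥ 1`,
`E‖m_{i,t} - m_{j,t}‖² ≤ 2σ²(α + (1-α)^{t-1})`. -/
theorem worker_momentum_pairwise_distance {Ω : Type*} {mΩ : MeasurableSpace Ω}
    (μ : Measure Ω) [IsProbabilityMeasure μ] {d : ℕ}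
    (σ α : ℝ) (hσ : 0 ≤ σ) (hα0 : 0 < α) (hα1 : α ≤ 1)
    (F : ℕ → MeasurableSpace Ω) (hF : ∀ t, F t ≤ mΩ) (hFmono : Monotone F)
    (mi mj gi gj : ℕ → Ω → EuclideanSpace ℝ (Fin d))
    -- momentum recursions, with `α₁ = 1`
    (hbasei : ∀ ω, mi 1 ω = gi 1 ω) (hbasej : ∀ ω, mj 1 ω = gj 1 ω)
    (hreci : ∀ t ≥ 2, ∀ ω, mi t ω = α • gi t ω + (1 - α) • mi (t - 1) ω)
    (hrecj : ∀ t ≥ 2, ∀ ω, mj t ω = α • gj t ω + (1 - α) • mj (t - 1) ω)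
    -- momenta are adapted to the filtration
    (hadpi : ∀ t, StronglyMeasurable[F t] (mi t))
    (hadpj : ∀ t, StronglyMeasurable[F t] (mj t))
    -- the gradient difference of two good workers is conditionally zero mean …
    (hunbiased : ∀ t ≥ 1, μ[fun ω => gi t ω - gj t ω|F (t - 1)] =ᵐ[μ] fun _ => 0)
    -- … with second moment at most `2σ²` (independence and variance ≤ σ² each)
    (hvar : ∀ t ≥ 1, (∫ ω, ‖gi t ω - gj t ω‖ ^ 2 ∂μ) ≤ 2 * σ ^ 2)
    -- integrability
    (hint : ∀ t, Integrable (fun ω => ‖mi t ω - mj t ω‖ ^ 2) μ)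
    (hintg : ∀ t, Integrable (fun ω => ‖gi t ω - gj t ω‖ ^ 2) μ) :
    ∀ t ≥ 1, (∫ ω, ‖mi t ω - mj t ω‖ ^ 2 ∂μ)
      ≤ 2 * σ ^ 2 * (α + (1 - α) ^ (t - 1)) :=
  worker_momentum_pairwise_distance_general μ σ α hα0 hα1 F hF mi mj gi gj hbasei hbasej hreci hrecj
    hadpi hadpj hunbiased hvar hint hintg
end
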